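/- Let μ = (μ₁, μ₂) and ν = (ν₁, ν₂) with μ ≠ ν as sets. Then the function F(x) = (1/2)(φ(x-μ₁) + φ(x-μ₂)) - (1/2)(φ(x-ν₁) + φ(x-ν₂)) has at most 3 real zeros. -/

import Mathlib

open Real Set

/-- If a set of reals contains no finset of size `m+1`, it is finite with `ncard ≤ m`. -/
lemma no_big_finset (Z : Set ℝ) (m : ℕ)
    (h : ∀ t : Finset ℝ, ↑t ⊆ Z → t.card ≠ m + 1) : Z.Finite ∧ Z.ncard ≤ m := by
  have hfin : Z.Finite := by
    by_contra hinf
    obtain ⟨t, hts, htf, htc⟩ := (show Z.Infinite from hinf).exists_subset_ncard_eq (m+1)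
    exact h htf.toFinset (by simpa using hts)
      (by rw [← Set.ncard_coe_finset, htf.coe_toFinset, htc])
  refine ⟨hfin, ?_⟩
  by_contra hc
  push_neg at hc
  obtain ⟨t, hts, htc⟩ := Set.exists_subset_card_eq (show m + 1 ≤ Z.ncard from hc)
  have htf : t.Finite := hfin.subset hts
  exact h htf.toFinset (by simpa using hts)
    (by rw [← Set.ncard_coe_finset, htf.coe_toFinset, htc])

/-- Rolle counting: zeros of `f` are at most one more than zeros of `deriv f`. -/
lemma rolle_count (f : ℝ → ℝ) (hf : Differentiable ℝ f) (k : ℕ)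
    (hD : {x : ℝ | deriv f x = 0}.Finite) (hDc : {x : ℝ | deriv f x = 0}.ncard ≤ k) :
    {x : ℝ | f x = 0}.Finite ∧ {x : ℝ | f x = 0}.ncard ≤ k + 1 := by
  apply no_big_finset
  intro t ht hcard
  set e := t.orderEmbOfFin hcard with he
  have hzero : ∀ i : Fin (k+2), f (e i) = 0 := fun i => ht (t.orderEmbOfFin_mem hcard i)
  have hstep : ∀ i : Fin (k+1),
      ∃ y ∈ Set.Ioo (e i.castSucc) (e i.succ), deriv f y = 0 := by
    intro i
    refine exists_deriv_eq_zero (e.strictMono (Fin.castSucc_lt_succ (i := i)))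
      hf.continuous.continuousOn (by rw [hzero, hzero])
  choose y hy hy0 using hstep
  have hmono : StrictMono y := by
    intro i j hij
    calc y i < e i.succ := (hy i).2
      _ ≤ e j.castSucc := e.monotone (by
          rw [Fin.le_def]
          simp only [Fin.val_succ, Fin.coe_castSucc]
          exact hij)
      _ < y j := (hy j).1
  have hsub : Set.range y ⊆ {x : ℝ | deriv f x = 0} := by
    rintro _ ⟨i, rfl⟩; exact hy0 i
  have hr : (Set.range y).ncard = k + 1 := by
    have : Set.range y = ↑(Finset.univ.image y) := by simp
    rw [this, Set.ncard_coe_finset, Finset.card_image_of_injective _ hmono.injective,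
      Finset.card_univ, Fintype.card_fin]
  have := Set.ncard_le_ncard hsub hD
  omega

/-- A nonzero exponential polynomial with `n+1` terms has at most `n` zeros. -/
lemma expPoly_zeros (n : ℕ) : ∀ (s : Finset ℝ) (c : ℝ → ℝ), s.card = n + 1 →
    (∀ a ∈ s, c a ≠ 0) →
    {x : ℝ | ∑ a ∈ s, c a * Real.exp (a * x) = 0}.Finite ∧
    {x : ℝ | ∑ a ∈ s, c a * Real.exp (a * x) = 0}.ncard ≤ n := by
  induction n with
  | zero =>
    intro s c hs hc
    obtain ⟨a, rfl⟩ := Finset.card_eq_one.mp hs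
    have hca := hc a (by simp)
    have h0 : {x : ℝ | ∑ b ∈ ({a} : Finset ℝ), c b * Real.exp (b * x) = 0} = ∅ := by
      ext x
      simp [mul_eq_zero, Real.exp_ne_zero, hca]
    rw [h0]
    simp
  | succ n ih =>
    intro s c hs hc
    have hne : s.Nonempty := by rw [← Finset.card_pos, hs]; omega
    set a₀ := s.min' hne with ha₀def
    have ha₀ : a₀ ∈ s := s.min'_mem hne
    set s' := s.erase a₀ with hs'def
    have hs' : s'.card = n + 1 := by
      rw [hs'def, Finset.card_erase_of_mem ha₀, hs]
      omega
    set H : ℝ → ℝ := fun x => ∑ a ∈ s, c a * Real.exp ((a - a₀) * x) with hH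
    have hZeq : {x : ℝ | ∑ a ∈ s, c a * Real.exp (a * x) = 0} = {x | H x = 0} := by
      ext x
      simp only [Set.mem_setOf_eq, hH]
      have key : (∑ a ∈ s, c a * Real.exp ((a - a₀) * x))
          = Real.exp (-(a₀ * x)) * ∑ a ∈ s, c a * Real.exp (a * x) := by
        rw [Finset.mul_sum]
        refine Finset.sum_congr rfl fun a _ => ?_
        rw [← mul_assoc, mul_comm (Real.exp (-(a₀ * x))) (c a), mul_assoc, ← Real.exp_add]
        ring_nf
      rw [key]
      constructor
      · intro h; rw [h, mul_zero]
      · intro h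
        rcases mul_eq_zero.mp h with h | h
        · exact absurd h (Real.exp_ne_zero _)
        · exact h
    rw [hZeq]
    have hderiv : ∀ x, HasDerivAt H
        (∑ a ∈ s, c a * ((a - a₀) * Real.exp ((a - a₀) * x))) x := by
      intro x
      apply HasDerivAt.fun_sum
      intro a _
      have h1 : HasDerivAt (fun x : ℝ => (a - a₀) * x) (a - a₀) x := by
        simpa using (hasDerivAt_id x).const_mul (a - a₀)
      have h2 := h1.exp
      have h3 := h2.const_mul (c a)
      convert h3 using 1
      exacts [rfl, by ring]
    have hHdiff : Differentiable ℝ H := fun x => (hderiv x).differentiableAt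
    have hDeq : {x : ℝ | deriv H x = 0}
        = {x : ℝ | ∑ b ∈ s'.image (· - a₀), (c (b + a₀) * b) * Real.exp (b * x) = 0} := by
      ext x
      rw [Set.mem_setOf_eq, Set.mem_setOf_eq, (hderiv x).deriv]
      rw [Finset.sum_image (fun a _ b _ h => by linarith : ∀ a ∈ s', ∀ b ∈ s',
        a - a₀ = b - a₀ → a = b)]
      have hsplit : (∑ a ∈ s, c a * ((a - a₀) * Real.exp ((a - a₀) * x)))
          = ∑ a ∈ s', c a * ((a - a₀) * Real.exp ((a - a₀) * x)) := by
        rw [hs'def, ← Finset.add_sum_erase s _ ha₀]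
        simp
      rw [hsplit]
      constructor
      · intro h
        rw [← h]
        refine (Finset.sum_congr rfl fun a _ => ?_).symm
        rw [sub_add_cancel]
        ring
      · intro h
        rw [← h]
        refine Finset.sum_congr rfl fun a _ => ?_
        rw [sub_add_cancel]
        ring
    have hc' : ∀ b ∈ s'.image (· - a₀), c (b + a₀) * b ≠ 0 := by
      intro b hb
      obtain ⟨a, ha, rfl⟩ := Finset.mem_image.mp hb
      rw [sub_add_cancel]
      exact mul_ne_zero (hc a (Finset.mem_of_mem_erase ha))
        (sub_ne_zero.mpr (Finset.ne_of_mem_erase ha))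
    have himg : (s'.image (· - a₀)).card = n + 1 := by
      rw [Finset.card_image_of_injective _ (fun a b h => by
        simpa using sub_left_injective h), hs']
    obtain ⟨hDf, hDc⟩ := ih _ _ himg hc'
    exact rolle_count H hHdiff n (hDeq ▸ hDf) (hDeq ▸ hDc)

lemma sets_eq_of_w (μ₁ μ₂ ν₁ ν₂ : ℝ)
    (h : ∀ a : ℝ, (if μ₁ = a then (1:ℝ) else 0) + (if μ₂ = a then 1 else 0)
      - (if ν₁ = a then 1 else 0) - (if ν₂ = a then 1 else 0) = 0) :
    ({μ₁, μ₂} : Set ℝ) = {ν₁, ν₂} := by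
  ext x
  have hx := h x
  simp only [Set.mem_insert_iff, Set.mem_singleton_iff]
  split_ifs at hx with h1 h2 h3 h4 <;> norm_num at hx <;> simp_all <;> tauto

/-- The difference of the densities of two (distinct) equal-weight mixtures of
two unit-variance Gaussians has at most 3 real zeros. -/
theorem mixture_difference_zeros (μ₁ μ₂ ν₁ ν₂ : ℝ)
    (hne : ({μ₁, μ₂} : Set ℝ) ≠ ({ν₁, ν₂} : Set ℝ)) :
    {x : ℝ |
      (1/2) * ((Real.sqrt (2 * π))⁻¹ * Real.exp (-(x - μ₁) ^ 2 / 2)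
             + (Real.sqrt (2 * π))⁻¹ * Real.exp (-(x - μ₂) ^ 2 / 2))
      - (1/2) * ((Real.sqrt (2 * π))⁻¹ * Real.exp (-(x - ν₁) ^ 2 / 2)
             + (Real.sqrt (2 * π))⁻¹ * Real.exp (-(x - ν₂) ^ 2 / 2)) = 0}.Finite ∧
    {x : ℝ |
      (1/2) * ((Real.sqrt (2 * π))⁻¹ * Real.exp (-(x - μ₁) ^ 2 / 2)
             + (Real.sqrt (2 * π))⁻¹ * Real.exp (-(x - μ₂) ^ 2 / 2))
      - (1/2) * ((Real.sqrt (2 * π))⁻¹ * Real.exp (-(x - ν₁) ^ 2 / 2)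
             + (Real.sqrt (2 * π))⁻¹ * Real.exp (-(x - ν₂) ^ 2 / 2)) = 0}.ncard ≤ 3 := by
  set w : ℝ → ℝ := fun a => (if μ₁ = a then (1:ℝ) else 0) + (if μ₂ = a then 1 else 0)
    - (if ν₁ = a then 1 else 0) - (if ν₂ = a then 1 else 0) with hw
  set c : ℝ → ℝ := fun a => w a * Real.exp (-a ^ 2 / 2) with hcdef
  set T : Finset ℝ := {μ₁, μ₂, ν₁, ν₂} with hT
  have hsqrt : Real.sqrt (2 * π) ≠ 0 :=
    ne_of_gt (Real.sqrt_pos.mpr (by positivity))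
  -- rewrite F as prefactor times the exponential polynomial
  have hFeq : ∀ x : ℝ,
      ((1/2) * ((Real.sqrt (2 * π))⁻¹ * Real.exp (-(x - μ₁) ^ 2 / 2)
             + (Real.sqrt (2 * π))⁻¹ * Real.exp (-(x - μ₂) ^ 2 / 2))
      - (1/2) * ((Real.sqrt (2 * π))⁻¹ * Real.exp (-(x - ν₁) ^ 2 / 2)
             + (Real.sqrt (2 * π))⁻¹ * Real.exp (-(x - ν₂) ^ 2 / 2)))
      = (1/2) * (Real.sqrt (2 * π))⁻¹ * Real.exp (-x ^ 2 / 2)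
        * ∑ a ∈ T, c a * Real.exp (a * x) := by
    intro x
    have hgroup : ∑ a ∈ T, c a * Real.exp (a * x)
        = Real.exp (-μ₁ ^ 2 / 2) * Real.exp (μ₁ * x)
        + Real.exp (-μ₂ ^ 2 / 2) * Real.exp (μ₂ * x)
        - Real.exp (-ν₁ ^ 2 / 2) * Real.exp (ν₁ * x)
        - Real.exp (-ν₂ ^ 2 / 2) * Real.exp (ν₂ * x) := by
      have expand : ∀ a ∈ T, c a * Real.exp (a * x)
          = (if μ₁ = a then Real.exp (-a ^ 2 / 2) * Real.exp (a * x) else 0)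
          + (if μ₂ = a then Real.exp (-a ^ 2 / 2) * Real.exp (a * x) else 0)
          - (if ν₁ = a then Real.exp (-a ^ 2 / 2) * Real.exp (a * x) else 0)
          - (if ν₂ = a then Real.exp (-a ^ 2 / 2) * Real.exp (a * x) else 0) := by
        intro a _
        simp only [hcdef, hw]
        split_ifs <;> ring
      rw [Finset.sum_congr rfl expand]
      have h1 : ∀ b : ℝ, b ∈ T → ∑ a ∈ T,
          (if b = a then Real.exp (-a ^ 2 / 2) * Real.exp (a * x) else 0)
          = Real.exp (-b ^ 2 / 2) * Real.exp (b * x) := by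
        intro b hb
        rw [Finset.sum_ite_eq T b (fun a => Real.exp (-a ^ 2 / 2) * Real.exp (a * x)), if_pos hb]
      simp only [Finset.sum_sub_distrib, Finset.sum_add_distrib]
      rw [h1 μ₁ (by simp [hT]), h1 μ₂ (by simp [hT]), h1 ν₁ (by simp [hT]),
        h1 ν₂ (by simp [hT])]
    rw [hgroup]
    have e1 : ∀ μ : ℝ, Real.exp (-(x - μ) ^ 2 / 2)
        = Real.exp (-x ^ 2 / 2) * (Real.exp (-μ ^ 2 / 2) * Real.exp (μ * x)) := by
      intro μ
      rw [← Real.exp_add, ← Real.exp_add]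
      ring_nf
    rw [e1 μ₁, e1 μ₂, e1 ν₁, e1 ν₂]
    ring
  -- the zero set equals the zero set of the exponential polynomial
  have hset : {x : ℝ |
      (1/2) * ((Real.sqrt (2 * π))⁻¹ * Real.exp (-(x - μ₁) ^ 2 / 2)
             + (Real.sqrt (2 * π))⁻¹ * Real.exp (-(x - μ₂) ^ 2 / 2))
      - (1/2) * ((Real.sqrt (2 * π))⁻¹ * Real.exp (-(x - ν₁) ^ 2 / 2)
             + (Real.sqrt (2 * π))⁻¹ * Real.exp (-(x - ν₂) ^ 2 / 2)) = 0}
      = {x : ℝ | ∑ a ∈ T, c a * Real.exp (a * x) = 0} := by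
    ext x
    rw [Set.mem_setOf_eq, Set.mem_setOf_eq, hFeq x]
    constructor
    · intro h
      rcases mul_eq_zero.mp h with h | h
      · exfalso
        rcases mul_eq_zero.mp h with h | h
        · rcases mul_eq_zero.mp h with h | h
          · norm_num at h
          · exact (inv_ne_zero hsqrt) h
        · exact Real.exp_ne_zero _ h
      · exact h
    · intro h; rw [h, mul_zero]
  rw [hset]
  -- restrict to the support of c
  set s : Finset ℝ := T.filter (fun a => c a ≠ 0) with hsdef
  have hsum : ∀ x : ℝ, ∑ a ∈ T, c a * Real.exp (a * x) = ∑ a ∈ s, c a * Real.exp (a * x) := by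
    intro x
    refine (Finset.sum_subset (Finset.filter_subset _ _) ?_).symm
    intro a haT has
    have : c a = 0 := by
      by_contra hca
      exact has (Finset.mem_filter.mpr ⟨haT, hca⟩)
    rw [this, zero_mul]
  have hset2 : {x : ℝ | ∑ a ∈ T, c a * Real.exp (a * x) = 0}
      = {x : ℝ | ∑ a ∈ s, c a * Real.exp (a * x) = 0} := by
    ext x; rw [Set.mem_setOf_eq, Set.mem_setOf_eq, hsum x]
  rw [hset2]
  -- s is nonempty
  have hsne : s.Nonempty := by
    by_contra hempty
    rw [Finset.not_nonempty_iff_eq_empty] at hempty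
    have hwz : ∀ a : ℝ, w a = 0 := by
      intro a
      by_cases haT : a ∈ T
      · have : c a = 0 := by
          by_contra hca
          have : a ∈ s := Finset.mem_filter.mpr ⟨haT, hca⟩
          simp [hempty] at this
        rw [hcdef] at this
        rcases mul_eq_zero.mp this with h | h
        · exact h
        · exact absurd h (Real.exp_ne_zero _)
      · simp only [hT, Finset.mem_insert, Finset.mem_singleton] at haT
        push_neg at haT
        simp only [hw]
        rw [if_neg (fun h => haT.1 h.symm), if_neg (fun h => haT.2.1 h.symm),
          if_neg (fun h => haT.2.2.1 h.symm), if_neg (fun h => haT.2.2.2 h.symm)]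
        ring
    exact hne (sets_eq_of_w μ₁ μ₂ ν₁ ν₂ (fun a => by
      have := hwz a
      simpa only [hw] using this))
  -- s has at most 4 elements
  have hcard4 : s.card ≤ 4 := by
    calc s.card ≤ T.card := Finset.card_filter_le _ _
      _ ≤ 4 := by
        rw [hT]
        apply le_trans (Finset.card_insert_le _ _)
        have := Finset.card_insert_le μ₂ ({ν₁, ν₂} : Finset ℝ)
        have := Finset.card_insert_le ν₁ ({ν₂} : Finset ℝ)
        simp_all
        omega
  have hcard : s.card = (s.card - 1) + 1 := by
    have := Finset.card_pos.mpr hsne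
    omega
  have hc' : ∀ a ∈ s, c a ≠ 0 := fun a ha => (Finset.mem_filter.mp ha).2
  obtain ⟨hf, hcle⟩ := expPoly_zeros (s.card - 1) s c hcard hc'
  exact ⟨hf, le_trans hcle (by omega)⟩
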